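/- arXiv:2501.00639 — 4 statements merged into one kernel-verified Lean document; each statement's English description precedes it below -/
import Mathlib

section
/- For integers m, n ≥ 2, the complete bipartite graph K_{m,n} satisfies ζ_{K_{m,n}}(u)^{-1} = (1 − u²)^{mn−m−n} · [ ((m−1)u² + 1)^n · ((n−1)u² + 1)^m − m·n·u² · ((m−1)u² + 1)^{n−1} · ((n−1)u² + 1)^{m−1} ] in ℤ[u]. -/
open Polynomial Matrix

/-- The reciprocal of the Ihara zeta function of a finite simple graph `G`, as a polynomial
in `ℤ[u]`: `(1 - u²)^(r-1) * det(I - A·u + Q·u²)`, where `A` is the adjacency matrix,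
`Q = D - I` with `D` the degree matrix, and `r - 1 = |E| - |V|`. -/
noncomputable def iharaZetaInv {V : Type} [Fintype V] [DecidableEq V]
    (G : SimpleGraph V) [DecidableRel G.Adj] : Polynomial ℤ :=
  (1 - X ^ 2) ^ (G.edgeFinset.card - Fintype.card V) *
    ((1 : Matrix V V (Polynomial ℤ)) - (X : Polynomial ℤ) • G.adjMatrix (Polynomial ℤ) +
      (X ^ 2 : Polynomial ℤ) • Matrix.diagonal (fun v => (G.degree v : Polynomial ℤ) - 1)).det

noncomputable instance (m n : ℕ) :
    DecidableRel (completeBipartiteGraph (Fin m) (Fin n)).Adj :=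
  Classical.decRel _

/-! Listing the `m` left vertices first, `I - A u + Q u²` for `K_{m,n}` is the block matrix with
diagonal blocks `(1 + (n-1)u²) I_m`, `(1 + (m-1)u²) I_n` and every off-diagonal-block entry
equal to `-u`. Over the fraction field of `ℤ[u]` the lower right block is invertible (both
scalars have constant term `1`), and its Schur complement is a scalar matrix plus a constant
matrix, whose determinant the matrix determinant lemma gives. -/

namespace Matrix

variable {m n : Type*} [Fintype m] [Fintype n] [DecidableEq m] [DecidableEq n]

theorem det_smul_one_add_of_const {K : Type*} [Field K] {x : K} (hx : x ≠ 0) (y : K) :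
    det (x • (1 : Matrix m m K) + of fun _ _ => y) =
      x ^ Fintype.card m + Fintype.card m * y * x ^ (Fintype.card m - 1) := by
  have hfactor : x • (1 : Matrix m m K) + of (fun _ _ => y) =
      x • (1 + replicateCol Unit (fun _ : m => y / x) * replicateRow Unit (1 : m → K)) := by
    ext i j
    simp [one_apply, mul_apply, mul_add, mul_div_cancel₀ _ hx]
  rw [hfactor, det_smul, det_one_add_replicateCol_mul_replicateRow]
  simp only [dotProduct, Pi.one_apply, one_mul, Finset.sum_const, Finset.card_univ,
    nsmul_eq_mul]
  cases Fintype.card m with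
  | zero => simp
  | succ k =>
    rw [pow_succ, Nat.add_sub_cancel]
    field_simp

/-- The truncated exponents `card m - 1`, `card n - 1` are harmless: at `0` the second term
vanishes anyway. -/
theorem det_fromBlocks_smul_one_of_const_of_field {K : Type*} [Field K] {a b : K} (ha : a ≠ 0)
    (hb : b ≠ 0) (c : K) :
    det (fromBlocks (a • 1 : Matrix m m K) (of fun _ _ => c) (of fun _ _ => c)
        (b • 1 : Matrix n n K)) =
      a ^ Fintype.card m * b ^ Fintype.card n -
        Fintype.card m * Fintype.card n * c ^ 2 *
          a ^ (Fintype.card m - 1) * b ^ (Fintype.card n - 1) := by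
  have hinv : (b • 1 : Matrix n n K) * (b⁻¹ • 1) = 1 := by
    rw [smul_mul_smul_comm, mul_inv_cancel₀ hb, one_mul, one_smul]
  let _ : Invertible (b • 1 : Matrix n n K) := invertibleOfRightInverse _ _ hinv
  -- Typed binders rather than `(of _ : Matrix m n K)` ascriptions: with those, the product
  -- elaborates through the `CStarMatrix` multiplication and `rw [hschur]` no longer matches.
  have hschur : (a • 1 : Matrix m m K) - of (fun (_ : m) (_ : n) => c) *
      (b⁻¹ • 1 : Matrix n n K) * of (fun (_ : n) (_ : m) => c) =
      a • 1 + of fun _ _ => -(Fintype.card n * c ^ 2 / b) := by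
    ext i j
    simp only [Matrix.mul_smul, Matrix.mul_one, smul_of, sub_apply, add_apply, smul_apply,
      smul_eq_mul, mul_apply, of_apply, Pi.smul_apply, Finset.sum_const, Finset.card_univ,
      nsmul_eq_mul]
    ring
  rw [det_fromBlocks₂₂, invOf_eq_right_inv hinv, hschur, det_smul_one_add_of_const ha, det_smul,
    det_one]
  cases Fintype.card n with
  | zero => simp
  | succ k =>
    rw [pow_succ, Nat.add_sub_cancel]
    field_simp
    ring

theorem det_fromBlocks_smul_one_of_const {R : Type*} [CommRing R] [IsDomain R] {a b : R}
    (ha : a ≠ 0) (hb : b ≠ 0) (c : R) :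
    det (fromBlocks (a • 1 : Matrix m m R) (of fun _ _ => c) (of fun _ _ => c)
        (b • 1 : Matrix n n R)) =
      a ^ Fintype.card m * b ^ Fintype.card n -
        Fintype.card m * Fintype.card n * c ^ 2 *
          a ^ (Fintype.card m - 1) * b ^ (Fintype.card n - 1) := by
  let φ := algebraMap R (FractionRing R)
  have hφ : Function.Injective φ := IsFractionRing.injective R (FractionRing R)
  have hmap : (fromBlocks (a • 1 : Matrix m m R) (of fun _ _ => c) (of fun _ _ => c)
      (b • 1 : Matrix n n R)).map φ =
      fromBlocks (φ a • 1) (of fun _ _ => φ c) (of fun _ _ => φ c) (φ b • 1) := by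
    ext (i | i) (j | j) <;> simp [one_apply, apply_ite φ]
  apply hφ
  rw [RingHom.map_det, RingHom.mapMatrix_apply, hmap, det_fromBlocks_smul_one_of_const_of_field
    ((map_ne_zero_iff φ hφ).mpr ha) ((map_ne_zero_iff φ hφ).mpr hb)]
  simp

end Matrix

namespace SimpleGraph

variable {V W : Type*}

def iharaMatrix [Fintype V] [DecidableEq V] (G : SimpleGraph V) [DecidableRel G.Adj]
    {R : Type*} [Ring R] (u : R) : Matrix V V R :=
  1 - u • G.adjMatrix R + u ^ 2 • diagonal fun v => (G.degree v : R) - 1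

section CompleteBipartite

variable [DecidableRel (completeBipartiteGraph V W).Adj]

theorem adjMatrix_completeBipartiteGraph (R : Type*) [Zero R] [One R] :
    (completeBipartiteGraph V W).adjMatrix R =
      fromBlocks 0 (of fun _ _ => 1) (of fun _ _ => 1) 0 := by
  ext (i | i) (j | j) <;> simp

variable [Fintype V] [Fintype W]

theorem degree_completeBipartiteGraph_inl (v : V) :
    (completeBipartiteGraph V W).degree (.inl v) = Fintype.card W := by
  rw [← card_neighborFinset_eq_degree,
    show (completeBipartiteGraph V W).neighborFinset (.inl v) = Finset.univ.map .inr by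
      ext (w | w) <;> simp]
  simp

theorem degree_completeBipartiteGraph_inr (w : W) :
    (completeBipartiteGraph V W).degree (.inr w) = Fintype.card V := by
  rw [← card_neighborFinset_eq_degree,
    show (completeBipartiteGraph V W).neighborFinset (.inr w) = Finset.univ.map .inl by
      ext (v | v) <;> simp]
  simp

theorem card_edgeFinset_completeBipartiteGraph [DecidableEq V] [DecidableEq W] :
    (completeBipartiteGraph V W).edgeFinset.card = Fintype.card V * Fintype.card W := by
  have h := (completeBipartiteGraph V W).sum_degrees_eq_twice_card_edges
  simp only [Fintype.sum_sum_type, degree_completeBipartiteGraph_inl,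
    degree_completeBipartiteGraph_inr, Finset.sum_const, Finset.card_univ, smul_eq_mul] at h
  linarith [Nat.mul_comm (Fintype.card V) (Fintype.card W)]

theorem iharaMatrix_completeBipartiteGraph [DecidableEq V] [DecidableEq W] {R : Type*} [CommRing R]
    (u : R) :
    (completeBipartiteGraph V W).iharaMatrix u =
      fromBlocks ((1 + ((Fintype.card W : R) - 1) * u ^ 2) • 1) (of fun _ _ => -u)
        (of fun _ _ => -u) ((1 + ((Fintype.card V : R) - 1) * u ^ 2) • 1) := by
  ext (i | i) (j | j) <;>
    simp [iharaMatrix, adjMatrix_completeBipartiteGraph, one_apply, diagonal_apply,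
      degree_completeBipartiteGraph_inl, degree_completeBipartiteGraph_inr] <;>
    split_ifs <;> ring

end CompleteBipartite

end SimpleGraph

theorem iharaZetaInv_eq_det_iharaMatrix {V : Type} [Fintype V] [DecidableEq V] (G : SimpleGraph V)
    [DecidableRel G.Adj] :
    iharaZetaInv G = (1 - X ^ 2) ^ (G.edgeFinset.card - Fintype.card V) * (G.iharaMatrix X).det :=
  rfl

theorem iharaZetaInv_completeBipartiteGraph_general (m n : ℕ) :
    iharaZetaInv (completeBipartiteGraph (Fin m) (Fin n)) =
      (1 - X ^ 2) ^ (m * n - m - n) *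
        ((C ((m : ℤ) - 1) * X ^ 2 + 1) ^ n * (C ((n : ℤ) - 1) * X ^ 2 + 1) ^ m -
          C ((m : ℤ) * (n : ℤ)) * X ^ 2 *
            (C ((m : ℤ) - 1) * X ^ 2 + 1) ^ (n - 1) *
            (C ((n : ℤ) - 1) * X ^ 2 + 1) ^ (m - 1)) := by
  have hne : ∀ k : ℕ, 1 + ((k : ℤ[X]) - 1) * X ^ 2 ≠ 0 := fun k h => by
    simpa using congrArg (eval 0) h
  rw [iharaZetaInv_eq_det_iharaMatrix, SimpleGraph.card_edgeFinset_completeBipartiteGraph,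
    SimpleGraph.iharaMatrix_completeBipartiteGraph,
    det_fromBlocks_smul_one_of_const (hne _) (hne _)]
  simp only [Fintype.card_sum, Fintype.card_fin, Nat.sub_sub, map_sub, map_mul, map_natCast,
    map_one]
  ring

/-- For `m, n ≥ 2`, the Ihara zeta function of the complete bipartite graph `K_{m,n}`. -/
theorem iharaZetaInv_completeBipartiteGraph (m n : ℕ) (hm : 2 ≤ m) (hn : 2 ≤ n) :
    iharaZetaInv (completeBipartiteGraph (Fin m) (Fin n)) =
      (1 - X ^ 2) ^ (m * n - m - n) *
        ((C ((m : ℤ) - 1) * X ^ 2 + 1) ^ n * (C ((n : ℤ) - 1) * X ^ 2 + 1) ^ m -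
          C ((m : ℤ) * (n : ℤ)) * X ^ 2 *
            (C ((m : ℤ) - 1) * X ^ 2 + 1) ^ (n - 1) *
            (C ((n : ℤ) - 1) * X ^ 2 + 1) ^ (m - 1)) :=
  iharaZetaInv_completeBipartiteGraph_general m n
end

section
/- For every integer n ≥ 2, the cocktail party graph O_{2n} satisfies ζ_{O_{2n}}(u)^{-1} = (1 − u²)^{2n²−4n} · ((2n−3)²u⁴ + (4n−6)u³ + (4n−6)u² + 2u + 1)^{n−1} · ((2n−3)u² + 1) · ((2n−3)u² + (2−2n)u + 1) in ℤ[u]. -/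
open Polynomial Matrix

/-- The cocktail party graph `O_{2n}`: the complement of a perfect matching on `2n` vertices.
Vertices are pairs `(i, a)` with `i : Fin n`, `a : Fin 2`, and `(i, a)` is adjacent to `(j, b)`
exactly when `i ≠ j`. -/
def cocktailPartyGraph (n : ℕ) : SimpleGraph (Fin n × Fin 2) where
  Adj x y := x.1 ≠ y.1
  symm := ⟨fun _ _ h => h.symm⟩
  loopless := ⟨fun _ h => h rfl⟩

instance (n : ℕ) : DecidableRel (cocktailPartyGraph n).Adj :=
  fun x y => inferInstanceAs (Decidable (x.1 ≠ y.1))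

/-!
Put `c = 1 + (2n - 3)u²`. Since `O_{2n}` is `(2n - 2)`-regular with adjacency matrix
`J - Iₙ ⊗ J₂`, we have `I - uA + u²Q = Iₙ ⊗ (c I₂ + u J₂) - u J`. The block-diagonal part `B`
has determinant `(c (c + 2u))ⁿ` and the all-ones vector as an eigenvector with eigenvalue
`c + 2u`, so the matrix determinant lemma for the rank-one correction `-u J` gives
`det = cⁿ (c + 2u)ⁿ⁻¹ (c + 2u - 2nu)`; the quartic factor is `c (c + 2u)`. The determinant
lemma needs `B` invertible, so the computation is done in the fraction field of `ℤ[u]`.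
-/

open scoped Kronecker

namespace Matrix

variable {ι : Type*} [Fintype ι] [DecidableEq ι]

theorem mul_det_add_const_of_mulVec_const {R : Type*} [CommRing R] {B : Matrix ι ι R}
    (hB : IsUnit B.det) {r : R} (hBr : B *ᵥ (fun _ => 1) = fun _ => r) (a : R) :
    r * (B + of fun _ _ => a).det = B.det * (r + Fintype.card ι * a) := by
  have hinv : (r • B⁻¹) *ᵥ (fun _ => 1) = fun _ => 1 := by
    rw [smul_mulVec, ← mulVec_smul, show r • (fun _ : ι => (1 : R)) = fun _ => r by ext; simp,
      ← hBr, mulVec_mulVec, nonsing_inv_mul B hB, one_mulVec]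
  have hsum : r * ((fun _ => 1) ⬝ᵥ B⁻¹ *ᵥ fun _ => 1) = Fintype.card ι := by
    have := congrArg (dotProduct fun _ => 1) hinv
    rw [smul_mulVec, dotProduct_smul, smul_eq_mul] at this
    simpa [dotProduct] using this
  have hrank1 : (of fun _ _ => a : Matrix ι ι R) =
      replicateCol Unit (fun _ => a) * replicateRow Unit (fun _ => (1 : R)) := by
    ext; simp [mul_apply]
  rw [hrank1, det_add_replicateCol_mul_replicateRow hB, Matrix.mul_assoc,
    ← replicateCol_mulVec, replicateRow_mul_replicateCol,
    det_unique (1 + of _ : Matrix Unit Unit R),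
    show (fun _ : ι => a) = a • fun _ => 1 by ext; simp, mulVec_smul, dotProduct_smul]
  simp only [add_apply, one_apply_eq, of_apply, smul_eq_mul]
  linear_combination B.det * a * hsum

theorem det_one_kronecker_sub_const {K : Type*} [Field K] [Nonempty ι] {c d : K} (hc : c ≠ 0)
    (hcd : c + 2 * d ≠ 0) :
    ((1 : Matrix ι ι K) ⊗ₖ (c • 1 + of fun _ _ => d : Matrix (Fin 2) (Fin 2) K) -
        of fun _ _ => d).det =
      c ^ Fintype.card ι * (c + 2 * d) ^ (Fintype.card ι - 1) *
        (c + 2 * d - 2 * Fintype.card ι * d) := by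
  set B := (1 : Matrix ι ι K) ⊗ₖ (c • 1 + of fun _ _ => d : Matrix (Fin 2) (Fin 2) K)
  have hdetB : B.det = (c * (c + 2 * d)) ^ Fintype.card ι := by
    rw [det_kronecker, det_one, one_pow, one_mul, det_fin_two]
    simp
    ring
  have hBr : B *ᵥ (fun _ => 1) = fun _ => c + 2 * d := by
    ext ⟨i, a⟩
    fin_cases a <;>
      simp [B, mulVec, dotProduct, Fintype.sum_prod_type, one_apply, Fin.sum_univ_two] <;> ring
  have hB : IsUnit B.det := by
    rw [hdetB]
    exact (mul_ne_zero hc hcd).isUnit.pow _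
  have key := mul_det_add_const_of_mulVec_const hB hBr (-d)
  have hneg : (B + of fun _ _ => -d) = B - of fun _ _ => d := by
    ext; simp [sub_eq_add_neg]
  rw [hneg, hdetB, Fintype.card_prod, Fintype.card_fin] at key
  obtain ⟨k, hk⟩ := Nat.exists_eq_add_one_of_ne_zero (Fintype.card_ne_zero (α := ι))
  rw [hk] at key ⊢
  apply mul_left_cancel₀ hcd
  rw [key, mul_pow]
  push_cast
  ring

theorem det_one_kronecker_sub_const_of_isDomain {R : Type*} [CommRing R] [IsDomain R]
    [Nonempty ι] {c d : R} (hc : c ≠ 0) (hcd : c + 2 * d ≠ 0) :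
    ((1 : Matrix ι ι R) ⊗ₖ (c • 1 + of fun _ _ => d : Matrix (Fin 2) (Fin 2) R) -
        of fun _ _ => d).det =
      c ^ Fintype.card ι * (c + 2 * d) ^ (Fintype.card ι - 1) *
        (c + 2 * d - 2 * Fintype.card ι * d) := by
  let f := algebraMap R (FractionRing R)
  have hf : Function.Injective f := IsFractionRing.injective R (FractionRing R)
  apply hf
  have hmap : ((1 : Matrix ι ι R) ⊗ₖ (c • 1 + of fun _ _ => d : Matrix (Fin 2) (Fin 2) R) -
      of fun _ _ => d).map f =
      (1 : Matrix ι ι _) ⊗ₖ (f c • 1 + of fun _ _ => f d : Matrix (Fin 2) (Fin 2) _) -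
        of fun _ _ => f d := by
    ext
    simp [one_apply, apply_ite f]
  rw [RingHom.map_det, RingHom.mapMatrix_apply, hmap,
    det_one_kronecker_sub_const ((map_ne_zero_iff f hf).2 hc)
      (by simpa [f, map_ofNat] using (map_ne_zero_iff f hf).2 hcd)]
  simp [f, map_ofNat]

end Matrix

noncomputable def iharaMatrix {V : Type} [Fintype V] [DecidableEq V] (G : SimpleGraph V)
    [DecidableRel G.Adj] : Matrix V V ℤ[X] :=
  1 - (X : ℤ[X]) • G.adjMatrix ℤ[X] +
    (X ^ 2 : ℤ[X]) • diagonal (fun v => (G.degree v : ℤ[X]) - 1)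

theorem iharaZetaInv_eq {V : Type} [Fintype V] [DecidableEq V] (G : SimpleGraph V)
    [DecidableRel G.Adj] :
    iharaZetaInv G = (1 - X ^ 2) ^ (G.edgeFinset.card - Fintype.card V) * (iharaMatrix G).det :=
  rfl

@[simp]
theorem cocktailPartyGraph_adj {n : ℕ} {v w : Fin n × Fin 2} :
    (cocktailPartyGraph n).Adj v w ↔ v.1 ≠ w.1 :=
  Iff.rfl

theorem cocktailPartyGraph_degree (n : ℕ) (v : Fin n × Fin 2) :
    (cocktailPartyGraph n).degree v = 2 * (n - 1) := by
  have hnbr :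
      (cocktailPartyGraph n).neighborFinset v = (Finset.univ.erase v.1) ×ˢ Finset.univ := by
    ext w
    simp [ne_comm]
  rw [← SimpleGraph.card_neighborFinset_eq_degree, hnbr, Finset.card_product,
    Finset.card_erase_of_mem (Finset.mem_univ _)]
  simp [mul_comm]

theorem card_edgeFinset_cocktailPartyGraph (n : ℕ) :
    (cocktailPartyGraph n).edgeFinset.card = 2 * n * (n - 1) := by
  have hsum := (cocktailPartyGraph n).sum_degrees_eq_twice_card_edges
  simp only [cocktailPartyGraph_degree, Finset.sum_const, Finset.card_univ, Fintype.card_prod,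
    Fintype.card_fin, smul_eq_mul] at hsum
  linarith

theorem iharaMatrix_cocktailPartyGraph {n : ℕ} (hn : 1 ≤ n) :
    iharaMatrix (cocktailPartyGraph n) =
      (1 : Matrix (Fin n) (Fin n) ℤ[X]) ⊗ₖ
          ((C (2 * (n : ℤ) - 3) * X ^ 2 + 1) • 1 + of fun _ _ => X :
            Matrix (Fin 2) (Fin 2) ℤ[X]) -
        of fun _ _ => X := by
  refine Matrix.ext fun ⟨i, a⟩ ⟨j, b⟩ => ?_
  by_cases hij : i = j <;> by_cases hab : a = b
  all_goals simp [iharaMatrix, one_apply, cocktailPartyGraph_degree, Nat.cast_sub hn, hij, hab]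
  ring

/-- For `n ≥ 2`, the Ihara zeta function of the cocktail party graph `O_{2n}`. -/
theorem iharaZetaInv_cocktailPartyGraph (n : ℕ) (hn : 2 ≤ n) :
    iharaZetaInv (cocktailPartyGraph n) =
      (1 - X ^ 2) ^ (2 * n ^ 2 - 4 * n) *
        (C ((2 * (n : ℤ) - 3) ^ 2) * X ^ 4 + C (4 * (n : ℤ) - 6) * X ^ 3 +
            C (4 * (n : ℤ) - 6) * X ^ 2 + 2 * X + 1) ^ (n - 1) *
        (C (2 * (n : ℤ) - 3) * X ^ 2 + 1) *
        (C (2 * (n : ℤ) - 3) * X ^ 2 + C (2 - 2 * (n : ℤ)) * X + 1) := by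
  have hrank : (cocktailPartyGraph n).edgeFinset.card - Fintype.card (Fin n × Fin 2) =
      2 * n ^ 2 - 4 * n := by
    rw [card_edgeFinset_cocktailPartyGraph, Fintype.card_prod, Fintype.card_fin, Fintype.card_fin,
      Nat.mul_sub_one, Nat.sub_sub]
    ring_nf
  set c : ℤ[X] := C (2 * (n : ℤ) - 3) * X ^ 2 + 1
  have hc : c ≠ 0 := fun h => by simpa [c] using congrArg (coeff · 0) h
  have hcX : c + 2 * X ≠ 0 := fun h => by simpa [c] using congrArg (coeff · 0) h
  have hquartic : C ((2 * (n : ℤ) - 3) ^ 2) * X ^ 4 + C (4 * (n : ℤ) - 6) * X ^ 3 +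
      C (4 * (n : ℤ) - 6) * X ^ 2 + 2 * X + 1 = c * (c + 2 * X) := by
    simp only [c, map_pow, map_sub, map_mul, map_ofNat, map_natCast]
    ring
  have hlast : C (2 * (n : ℤ) - 3) * X ^ 2 + C (2 - 2 * (n : ℤ)) * X + 1 =
      c + 2 * X - 2 * (n : ℤ[X]) * X := by
    simp only [c, map_sub, map_mul, map_ofNat, map_natCast]
    ring
  have : NeZero n := ⟨by omega⟩
  rw [iharaZetaInv_eq, hrank, iharaMatrix_cocktailPartyGraph (by omega),
    Matrix.det_one_kronecker_sub_const_of_isDomain hc hcX, Fintype.card_fin, hquartic, hlast,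
    ← pow_sub_one_mul (by omega : n ≠ 0) c, mul_pow]
  ring
end

section
/- For every integer n ≥ 3, the graph B_{2n} obtained from K_{n,n} by deleting a perfect matching satisfies ζ_{B_{2n}}(u)^{-1} = (1 − u²)^{n(n−3)} · ((1 + (n−2)u²)² − u²)^{n−1} · ((1 + (n−2)u²)² − (1−n)²u²) in ℤ[u]. -/
/-!
`B_{2n}` is `(n-1)`-regular, so its Ihara matrix is `d • 1 - u • A` with `d = 1 + (n-2) u²`,
and its adjacency matrix is the Kronecker product `A(Kₙ) ⊗ A(K₂)`. In block form the Ihara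
matrix is `[[d, -u A(Kₙ)], [-u A(Kₙ), d]]`, and block row and column operations give its
determinant as `det (d - u A(Kₙ)) * det (d + u A(Kₙ))`. Since `A(Kₙ) = J - 1` with `J` the
all-ones matrix, each factor is a scalar matrix minus a rank-one matrix, whose determinant is
an evaluation of the characteristic polynomial `X ^ n - n X ^ (n-1)` of `J`.
-/

open Polynomial Matrix

/-- The graph `B_{2n}`: the complete bipartite graph `K_{n,n}` with a perfect matching removed.
Vertices are pairs `(i, a)` with `i : Fin n`, `a : Fin 2` (the part is the second coordinate),
and `(i, a)` is adjacent to `(j, b)` exactly when `i ≠ j` and `a ≠ b`. -/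
def matchingDeletedBipartiteGraph (n : ℕ) : SimpleGraph (Fin n × Fin 2) where
  Adj x y := x.1 ≠ y.1 ∧ x.2 ≠ y.2
  symm := ⟨fun _ _ h => ⟨h.1.symm, h.2.symm⟩⟩
  loopless := ⟨fun _ h => h.1 rfl⟩

instance (n : ℕ) : DecidableRel (matchingDeletedBipartiteGraph n).Adj :=
  fun x y => inferInstanceAs (Decidable (x.1 ≠ y.1 ∧ x.2 ≠ y.2))

open scoped Kronecker
open Finset

namespace Matrix

variable {R ι : Type*} [CommRing R] [Fintype ι] [DecidableEq ι]

theorem det_fromBlocks_self_swap (A B : Matrix ι ι R) :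
    (fromBlocks A B B A).det = (A + B).det * (A - B).det := by
  have h : fromBlocks 1 1 0 1 * fromBlocks A B B A * fromBlocks 1 (-1) 0 1 =
      fromBlocks (A + B) 0 B (A - B) := by
    -- add the second block row to the first, then subtract the first block column from the second
    simp only [fromBlocks_multiply, Matrix.one_mul, Matrix.zero_mul, Matrix.mul_one,
      Matrix.mul_zero, Matrix.mul_neg]
    congr 1 <;> abel
  simpa [det_fromBlocks_zero₂₁, det_fromBlocks_zero₁₂] using congrArg det h

theorem det_kronecker_one_add_kronecker_swap (A B : Matrix ι ι R) :
    (A ⊗ₖ (1 : Matrix (Fin 2) (Fin 2) R) + B ⊗ₖ !![0, 1; 1, 0]).det =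
      (A + B).det * (A - B).det := by
  let e : ι × Fin 2 ≃ ι ⊕ ι := (Equiv.prodComm ι (Fin 2)).trans
    ((finTwoEquiv.prodCongr (Equiv.refl ι)).trans (Equiv.boolProdEquivSum ι))
  rw [← det_reindex_self e, ← det_fromBlocks_self_swap]
  congr 1
  ext (i | i) (j | j) <;> simp [e, finTwoEquiv]

theorem det_scalar_sub_smul_kronecker_swap (c s : R) (K : Matrix ι ι R) :
    (scalar (ι × Fin 2) c - s • (K ⊗ₖ !![0, 1; 1, 0])).det =
      (scalar ι c - s • K).det * (scalar ι c + s • K).det := by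
  have h : scalar (ι × Fin 2) c - s • (K ⊗ₖ !![0, 1; 1, 0]) =
      scalar ι c ⊗ₖ (1 : Matrix (Fin 2) (Fin 2) R) + (-s • K) ⊗ₖ !![0, 1; 1, 0] := by
    rw [smul_kronecker, neg_smul, ← sub_eq_add_neg, scalar_apply, scalar_apply,
      ← smul_one_eq_diagonal, ← smul_one_eq_diagonal, smul_kronecker, one_kronecker_one]
  rw [h, det_kronecker_one_add_kronecker_swap, neg_smul, ← sub_eq_add_neg, sub_neg_eq_add]

theorem det_scalar_sub_smul_adjMatrix_top [Nonempty ι] (t s : R) :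
    (scalar ι t - s • (⊤ : SimpleGraph ι).adjMatrix R).det =
      (t + s) ^ (Fintype.card ι - 1) * (t + s - Fintype.card ι * s) := by
  have h : scalar ι t - s • (⊤ : SimpleGraph ι).adjMatrix R =
      scalar ι (t + s) - vecMulVec (fun _ => s) (fun _ => 1) := by
    ext i j
    rcases eq_or_ne i j with rfl | hij <;> simp [vecMulVec, *]
  obtain ⟨k, hk⟩ : ∃ k, Fintype.card ι = k + 1 :=
    ⟨_, (Nat.succ_pred_eq_of_pos Fintype.card_pos).symm⟩
  rw [h, ← eval_charpoly, charpoly_vecMulVec]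
  simp only [hk, pow_succ, dotProduct, mul_one, sum_const, card_univ, nsmul_eq_mul, Nat.cast_add,
    Nat.cast_one, add_tsub_cancel_right, eval_sub, eval_mul, eval_pow, eval_X, eval_smul, smul_eq_mul]
  ring

end Matrix

theorem SimpleGraph.IsRegularOfDegree.two_mul_card_edgeFinset {V : Type*} [Fintype V]
    {G : SimpleGraph V} [DecidableRel G.Adj] {d : ℕ} (h : G.IsRegularOfDegree d) :
    2 * #G.edgeFinset = Fintype.card V * d := by
  rw [← G.sum_degrees_eq_twice_card_edges, sum_congr rfl fun v _ => h.degree_eq v]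
  simp

theorem iharaZetaInv_eq_of_isRegularOfDegree {V : Type} [Fintype V] [DecidableEq V]
    {G : SimpleGraph V} [DecidableRel G.Adj] {d : ℕ} (h : G.IsRegularOfDegree d) :
    iharaZetaInv G = (1 - X ^ 2) ^ (#G.edgeFinset - Fintype.card V) *
      (scalar V (1 + ((d : ℤ[X]) - 1) * X ^ 2) - (X : ℤ[X]) • G.adjMatrix ℤ[X]).det := by
  rw [iharaZetaInv, sub_add_eq_add_sub]
  congr 3
  ext v w : 1
  rcases eq_or_ne v w with rfl | hvw
  · simp only [h.degree_eq, Matrix.add_apply, one_apply_eq, Matrix.smul_apply, diagonal_apply_eq,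
      smul_eq_mul, scalar_apply]
    ring
  · simp [hvw]

namespace matchingDeletedBipartiteGraph

theorem isRegularOfDegree (n : ℕ) :
    (matchingDeletedBipartiteGraph n).IsRegularOfDegree (n - 1) := by
  intro v
  have h : (matchingDeletedBipartiteGraph n).neighborFinset v =
      ({v.1}ᶜ ×ˢ {v.2}ᶜ : Finset _) := by
    ext w
    rw [SimpleGraph.mem_neighborFinset]
    simp [matchingDeletedBipartiteGraph, ne_comm]
  rw [← SimpleGraph.card_neighborFinset_eq_degree, h, card_product, card_compl, card_compl]
  simp

theorem card_edgeFinset (n : ℕ) :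
    #(matchingDeletedBipartiteGraph n).edgeFinset = n * (n - 1) := by
  have h := (isRegularOfDegree n).two_mul_card_edgeFinset
  simp only [Fintype.card_prod, Fintype.card_fin] at h
  linarith

theorem adjMatrix_eq (n : ℕ) (R : Type*) [Ring R] :
    (matchingDeletedBipartiteGraph n).adjMatrix R =
      (⊤ : SimpleGraph (Fin n)).adjMatrix R ⊗ₖ !![0, 1; 1, 0] := by
  ext ⟨i, a⟩ ⟨j, b⟩
  rw [SimpleGraph.adjMatrix_apply]
  fin_cases a <;> fin_cases b <;> simp [matchingDeletedBipartiteGraph, kroneckerMap_apply, eq_comm]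

end matchingDeletedBipartiteGraph

/-- For `n ≥ 3`, the Ihara zeta function of `B_{2n}`, i.e. `K_{n,n}` minus a perfect
matching. -/
theorem iharaZetaInv_matchingDeletedBipartiteGraph (n : ℕ) (hn : 3 ≤ n) :
    iharaZetaInv (matchingDeletedBipartiteGraph n) =
      (1 - X ^ 2) ^ (n * (n - 3)) *
        ((1 + C ((n : ℤ) - 2) * X ^ 2) ^ 2 - X ^ 2) ^ (n - 1) *
        ((1 + C ((n : ℤ) - 2) * X ^ 2) ^ 2 - C ((1 - (n : ℤ)) ^ 2) * X ^ 2) := by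
  have : Nonempty (Fin n) := ⟨⟨0, by omega⟩⟩
  set c : ℤ[X] := 1 + C ((n : ℤ) - 2) * X ^ 2
  have hc : 1 + (((n - 1 : ℕ) : ℤ[X]) - 1) * X ^ 2 = c := by
    simp only [c, Nat.cast_sub (show 1 ≤ n by omega), Nat.cast_one, map_sub, map_natCast, map_ofNat]
    ring
  have hexp : n * (n - 1) - n * 2 = n * (n - 3) := by
    rw [← Nat.mul_sub, Nat.sub_sub]
  have hminus := det_scalar_sub_smul_adjMatrix_top (ι := Fin n) c X
  have hplus := det_scalar_sub_smul_adjMatrix_top (ι := Fin n) c (-X)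
  rw [neg_smul, sub_neg_eq_add, ← sub_eq_add_neg, mul_neg, sub_neg_eq_add] at hplus
  rw [iharaZetaInv_eq_of_isRegularOfDegree (matchingDeletedBipartiteGraph.isRegularOfDegree n),
    matchingDeletedBipartiteGraph.card_edgeFinset, matchingDeletedBipartiteGraph.adjMatrix_eq,
    hc, det_scalar_sub_smul_kronecker_swap, hminus, hplus, Fintype.card_prod, Fintype.card_fin,
    Fintype.card_fin, hexp, map_pow, map_sub, map_one, map_natCast,
    show c ^ 2 - X ^ 2 = (c + X) * (c - X) by ring, mul_pow]
  ring
end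

section
/- Let n ≥ 4 be an even integer, let M_n be the Möbius ladder graph, and let ω = exp(2πi/n) ∈ ℂ. Then for every u ∈ ℂ, ζ_{M_n}(u)^{-1} = (1 − u²)^{n/2} · ∏_{k=0}^{n−1} (1 + 2u² − u·(ω^k + ω^{k·n/2} + ω^{k(n−1)})). Equivalently, det(I − A·u + Q·u²) = ∏_{k=0}^{n−1} (1 + 2u² − u·(ω^k + ω^{k·n/2} + ω^{k(n−1)})). -/
open Matrix

/-- The Möbius ladder graph `M_n` on vertex set `ZMod n` (for `n` even): `i` is adjacent to
`j` exactly when `j - i ∈ {1, -1, n/2}`. -/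
def mobiusLadder (n : ℕ) : SimpleGraph (ZMod n) where
  Adj i j := i ≠ j ∧ (j - i = 1 ∨ i - j = 1 ∨ j - i = (n / 2 : ℕ) ∨ i - j = (n / 2 : ℕ))
  symm := ⟨by
    rintro i j ⟨h1, h2⟩
    exact ⟨h1.symm, by tauto⟩⟩
  loopless := ⟨fun i h => h.1 rfl⟩

noncomputable instance (n : ℕ) : DecidableRel (mobiusLadder n).Adj :=
  Classical.decRel _

/-!
Adjacency in `M_n` depends only on `i - j ∈ {1, -1, n/2}`, so `I - A u + Q u²` is a circulant
matrix over `ZMod n`. Every additive character `ψ` of `ZMod n` is an eigenvector of a circulant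
matrix with first column `c`, with eigenvalue `∑ g, c g * ψ (-g)`, and the `n` characters
`j ↦ ω ^ (k j)` are linearly independent (Dedekind), so the determinant is the product of these
eigenvalues. For `M_n` the eigenvalue at `k` is `1 + 2u² - u (ω^k + ω^(k n/2) + ω^(-k))`.
-/

open Finset

namespace AddChar

theorem linearIndependent_of_injective {G K ι : Type*} [AddCommGroup G] [CommRing K]
    [IsDomain K] {ψ : ι → AddChar G K} (hψ : Function.Injective ψ) :
    LinearIndependent K (fun k => (ψ k : G → K)) :=
  (linearIndependent_monoidHom (Multiplicative G) K).comp (fun k => (ψ k).toMonoidHom)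
    (toMonoidHomEquiv.injective.comp hψ)

end AddChar

namespace Matrix

variable {G R : Type*} [AddCommGroup G] [Fintype G]

theorem circulant_mulVec_addChar [CommRing R] (c : G → R) (ψ : AddChar G R) :
    circulant c *ᵥ ψ = (∑ g, c g * ψ (-g)) • ⇑ψ := by
  ext i
  simp only [mulVec, dotProduct, circulant_apply, Pi.smul_apply, smul_eq_mul, sum_mul]
  refine Fintype.sum_equiv (Equiv.subLeft i) _ _ fun j => ?_
  rw [Equiv.subLeft_apply, mul_assoc, ← AddChar.map_add_eq_mul, neg_sub, sub_add_cancel]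

theorem det_circulant_eq_prod_addChar [DecidableEq G] [Field R] {ψ : G → AddChar G R}
    (hψ : Function.Injective ψ) (c : G → R) :
    (circulant c).det = ∏ k, ∑ g, c g * ψ k (-g) := by
  set F : Matrix G G R := of fun i k => ψ k i
  have hF : IsUnit F :=
    linearIndependent_cols_iff_isUnit.mp (AddChar.linearIndependent_of_injective hψ)
  have hCF : circulant c * F = F * diagonal fun k => ∑ g, c g * ψ k (-g) := by
    ext i k
    have := congrFun (circulant_mulVec_addChar c (ψ k)) i
    simpa [mul_apply, F, mulVec, dotProduct, mul_comm, diagonal_apply] using this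
  have := congrArg det hCF
  rw [det_mul, det_mul, det_diagonal, mul_comm] at this
  exact mul_left_cancel₀ ((isUnit_iff_isUnit_det F).mp hF).ne_zero this

end Matrix

namespace ZMod

variable {n : ℕ}

theorem natCast_inj_of_lt {a b : ℕ} (ha : a < n) (hb : b < n) :
    (a : ZMod n) = b ↔ a = b :=
  ⟨fun h => by simpa [val_cast_of_lt ha, val_cast_of_lt hb] using congrArg val h,
    congrArg _⟩

theorem neg_one_eq_natCast_pred [NeZero n] : (-1 : ZMod n) = ((n - 1 : ℕ) : ZMod n) := by
  rw [Nat.cast_sub NeZero.one_le, natCast_self, Nat.cast_one, zero_sub]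

theorem neg_natCast_half (hev : Even n) : -((n / 2 : ℕ) : ZMod n) = ((n / 2 : ℕ) : ZMod n) := by
  rw [neg_eq_iff_add_eq_zero, ← Nat.cast_add, ← two_mul,
    Nat.mul_div_cancel' (even_iff_two_dvd.mp hev), natCast_self]

theorem prod_univ_eq_prod_range [NeZero n] {M : Type*} [CommMonoid M]
    (f : ZMod n → M) : ∏ k, f k = ∏ m ∈ range n, f m :=
  prod_nbij' val (↑) (fun a _ => mem_range.mpr (val_lt a)) (fun _ _ => mem_univ _)
    (fun a _ => natCast_zmod_val a) (fun _ hm => val_cast_of_lt (mem_range.mp hm))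
    (fun a _ => by rw [natCast_zmod_val])

open Complex in
theorem stdAddChar_natCast [NeZero n] (a : ℕ) :
    stdAddChar (a : ZMod n) = exp (2 * Real.pi * I / n) ^ a := by
  rw [← Int.cast_natCast, stdAddChar_coe, ← Complex.exp_nat_mul]
  push_cast
  ring_nf

end ZMod

section MobiusLadder

variable {n : ℕ}

def mobiusLadderJumps (n : ℕ) : Finset (ZMod n) := {1, -1, ((n / 2 : ℕ) : ZMod n)}

theorem mobiusLadder_adj_iff [NeZero n] (hev : Even n) {i j : ZMod n} :
    (mobiusLadder n).Adj i j ↔ i - j ∈ mobiusLadderJumps n := by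
  have hn : 2 ≤ n := by
    obtain ⟨k, rfl⟩ := hev
    have := NeZero.ne (k + k)
    omega
  have hne : ∀ a, 0 < a → a < n → (a : ZMod n) ≠ 0 := fun a ha han h =>
    ha.ne' ((ZMod.natCast_inj_of_lt han (NeZero.pos n)).mp (by rw [h, Nat.cast_zero]))
  have h1 : (1 : ZMod n) ≠ 0 := by exact_mod_cast hne 1 (by omega) (by omega)
  have hh : ((n / 2 : ℕ) : ZMod n) ≠ 0 := hne _ (by omega) (by omega)
  have e1 : j - i = 1 ↔ i - j = -1 := by rw [← neg_sub i j, neg_eq_iff_eq_neg]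
  have e2 : j - i = (n / 2 : ℕ) ↔ i - j = (n / 2 : ℕ) := by
    rw [← neg_sub i j, neg_eq_iff_eq_neg, ZMod.neg_natCast_half hev]
  simp only [mobiusLadder, mobiusLadderJumps, mem_insert, mem_singleton, e1, e2]
  constructor
  · rintro ⟨-, h⟩
    tauto
  · intro h
    refine ⟨fun hij => ?_, by tauto⟩
    rw [hij, sub_self] at h
    rcases h with h | h | h
    exacts [h1 h.symm, h1 (neg_eq_zero.mp h.symm), hh h.symm]

theorem mobiusLadder_adjMatrix [NeZero n] (hev : Even n) (R : Type*) [Zero R] [One R] :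
    (mobiusLadder n).adjMatrix R =
      circulant fun g => if g ∈ mobiusLadderJumps n then 1 else 0 := by
  ext i j
  simp [SimpleGraph.adjMatrix_apply, circulant_apply, mobiusLadder_adj_iff hev]

theorem sum_mobiusLadderJumps (hn : 4 ≤ n) {M : Type*} [AddCommMonoid M] (f : ZMod n → M) :
    ∑ g ∈ mobiusLadderJumps n, f g = f 1 + f (-1) + f ((n / 2 : ℕ) : ZMod n) := by
  have : NeZero n := ⟨by omega⟩
  have hne : ∀ a b, a < n → b < n → a ≠ b → (a : ZMod n) ≠ b :=
    fun a b ha hb hab h => hab ((ZMod.natCast_inj_of_lt ha hb).mp h)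
  rw [mobiusLadderJumps, sum_insert, sum_insert, sum_singleton, add_assoc]
  · rw [mem_singleton, ZMod.neg_one_eq_natCast_pred]
    exact hne _ _ (by omega) (by omega) (by omega)
  · rw [mem_insert, mem_singleton, ZMod.neg_one_eq_natCast_pred, not_or, ← Nat.cast_one]
    exact ⟨hne _ _ (by omega) (by omega) (by omega), hne _ _ (by omega) (by omega) (by omega)⟩

theorem card_mobiusLadderJumps (hn : 4 ≤ n) : #(mobiusLadderJumps n) = 3 := by
  rw [card_eq_sum_ones, sum_mobiusLadderJumps hn]

theorem mobiusLadder_degree [NeZero n] (hn : 4 ≤ n) (hev : Even n) (v : ZMod n) :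
    (mobiusLadder n).degree v = 3 := by
  rw [← card_mobiusLadderJumps hn, ← SimpleGraph.card_neighborFinset_eq_degree]
  exact card_nbij' (v - ·) (v - ·)
    (fun a ha => by simpa [mobiusLadder_adj_iff hev] using ha)
    (fun g hg => by simpa [mobiusLadder_adj_iff hev] using hg)
    (fun a _ => sub_sub_cancel v a) (fun g _ => sub_sub_cancel v g)

end MobiusLadder

section IharaMatrix

variable {n : ℕ} {R : Type*} [CommRing R]

def mobiusLadderIharaColumn (n : ℕ) (u : R) : ZMod n → R :=
  fun g => (if g = 0 then 1 + 2 * u ^ 2 else 0) - if g ∈ mobiusLadderJumps n then u else 0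

theorem mobiusLadder_iharaMatrix_eq_circulant [NeZero n] (hn : 4 ≤ n) (hev : Even n) (u : R) :
    1 - u • (mobiusLadder n).adjMatrix R +
        u ^ 2 • diagonal (fun v => ((mobiusLadder n).degree v : R) - 1) =
      circulant (mobiusLadderIharaColumn n u) := by
  ext i j
  simp only [mobiusLadder_adjMatrix hev, mobiusLadder_degree hn hev, mobiusLadderIharaColumn,
    circulant_apply, Matrix.sub_apply, Matrix.add_apply, Matrix.smul_apply, one_apply,
    diagonal_apply, sub_eq_zero, smul_eq_mul]
  split_ifs <;> ring

theorem sum_mobiusLadderIharaColumn_mul [NeZero n] (hn : 4 ≤ n) (u : R)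
    (ψ : AddChar (ZMod n) R) :
    ∑ g, mobiusLadderIharaColumn n u g * ψ (-g) =
      1 + 2 * u ^ 2 - u * (ψ (-1) + ψ 1 + ψ (-((n / 2 : ℕ) : ZMod n))) := by
  simp only [mobiusLadderIharaColumn, sub_mul, ite_mul, zero_mul, sum_sub_distrib, sum_ite_eq',
    mem_univ, if_true, neg_zero, AddChar.map_zero_eq_one, mul_one, ← sum_filter,
    filter_mem_eq_inter, univ_inter, sum_mobiusLadderJumps hn, neg_neg, mul_add]

theorem sum_mobiusLadderIharaColumn_mul_stdAddChar [NeZero n] (hn : 4 ≤ n) (hev : Even n)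
    (u : ℂ) (m : ℕ) :
    ∑ g, mobiusLadderIharaColumn n u g * ZMod.stdAddChar.mulShift (m : ZMod n) (-g) =
      1 + 2 * u ^ 2 -
        u * (Complex.exp (2 * Real.pi * Complex.I / n) ^ m +
          Complex.exp (2 * Real.pi * Complex.I / n) ^ (m * (n / 2)) +
          Complex.exp (2 * Real.pi * Complex.I / n) ^ (m * (n - 1))) := by
  have hneg_one : (m : ZMod n) * -1 = (m * (n - 1) : ℕ) := by
    rw [Nat.cast_mul, ← ZMod.neg_one_eq_natCast_pred]
  have hneg_half : (m : ZMod n) * -((n / 2 : ℕ) : ZMod n) = (m * (n / 2) : ℕ) := by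
    rw [ZMod.neg_natCast_half hev, Nat.cast_mul]
  rw [sum_mobiusLadderIharaColumn_mul hn]
  simp only [AddChar.mulShift_apply, mul_one, hneg_one, hneg_half, ZMod.stdAddChar_natCast]
  ring

end IharaMatrix

/-- For `n ≥ 4` even and `ω = exp(2πi/n)`, the Ihara zeta function of the Möbius ladder
`M_n` satisfies, for every `u ∈ ℂ`,
`ζ_{M_n}(u)⁻¹ = (1-u²)^{n/2} ∏_{k=0}^{n-1} (1 + 2u² - u(ω^k + ω^{kn/2} + ω^{k(n-1)}))`;
equivalently `det(I - A·u + Q·u²)` equals the displayed product. -/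
theorem iharaZetaInv_mobiusLadder (n : ℕ) [NeZero n] (hn : 4 ≤ n) (hev : Even n) (u : ℂ) :
    ((1 - u ^ 2) ^ (n / 2) *
        ((1 : Matrix (ZMod n) (ZMod n) ℂ) - u • (mobiusLadder n).adjMatrix ℂ +
          (u ^ 2) • Matrix.diagonal (fun v => ((mobiusLadder n).degree v : ℂ) - 1)).det =
      (1 - u ^ 2) ^ (n / 2) *
        ∏ k ∈ Finset.range n,
          (1 + 2 * u ^ 2 -
            u * (Complex.exp (2 * Real.pi * Complex.I / n) ^ k +
                 Complex.exp (2 * Real.pi * Complex.I / n) ^ (k * (n / 2)) +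
                 Complex.exp (2 * Real.pi * Complex.I / n) ^ (k * (n - 1))))) ∧
    ((1 : Matrix (ZMod n) (ZMod n) ℂ) - u • (mobiusLadder n).adjMatrix ℂ +
        (u ^ 2) • Matrix.diagonal (fun v => ((mobiusLadder n).degree v : ℂ) - 1)).det =
      ∏ k ∈ Finset.range n,
        (1 + 2 * u ^ 2 -
          u * (Complex.exp (2 * Real.pi * Complex.I / n) ^ k +
               Complex.exp (2 * Real.pi * Complex.I / n) ^ (k * (n / 2)) +
               Complex.exp (2 * Real.pi * Complex.I / n) ^ (k * (n - 1)))) := by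
  have hdet := det_circulant_eq_prod_addChar
    (AddChar.to_mulShift_inj_of_isPrimitive (ZMod.isPrimitive_stdAddChar n))
    (mobiusLadderIharaColumn n u)
  rw [← mobiusLadder_iharaMatrix_eq_circulant hn hev, ZMod.prod_univ_eq_prod_range] at hdet
  simp only [sum_mobiusLadderIharaColumn_mul_stdAddChar hn hev] at hdet
  exact ⟨by rw [hdet], hdet⟩
end
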